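/- Let $\mathcal{P}$ be a dense subset of the compact interval $[a,b]$ and let $f \in L_\infty(a,b)$. Then there exists a sequence $(f_k)$ of step functions on $[a,b]$, whose partition points all belong to $\mathcal{P} \cup \{a,b\}$, such that $f_k \to f$ in the weak* topology of $L_\infty(a,b) = (L_1(a,b))^*$, i.e., $\int_a^b f_k(t) h(t)\,dt \to \int_a^b f(t) h(t)\,dt$ for every $h \in L_1(a,b)$. -/

import Mathlib

open MeasureTheory Filter Set Topology
open scoped ENNReal
open scoped RealInnerProductSpace

/-- `f` is a step function on `[a,b]` with all partition points in
`P ∪ {a, b}`. -/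
def IsStepOnWith (a b : ℝ) (P : Set ℝ) (f : ℝ → ℂ) : Prop :=
  ∃ (k : ℕ) (t : Fin (k + 1) → ℝ), StrictMono t ∧ t 0 = a ∧ t (Fin.last k) = b ∧
    (∀ i : Fin (k + 1), t i ∈ P ∪ {a, b}) ∧
    ∀ i : Fin k, ∃ c : ℂ, ∀ x ∈ Set.Ioo (t i.castSucc) (t i.succ), f x = c

noncomputable def myTrunc (M : ℝ) (v : ℂ) : ℂ := if ‖v‖ ≤ M then v else (M / ‖v‖ : ℝ) • v

lemma norm_myTrunc_le (M : ℝ) (hM : 0 ≤ M) (v : ℂ) : ‖myTrunc M v‖ ≤ M := by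
  unfold myTrunc; split_ifs with h
  · exact h
  · push_neg at h
    have hv : 0 < ‖v‖ := hM.trans_lt h
    rw [norm_smul, Real.norm_eq_abs, abs_div, abs_of_nonneg hM, abs_of_pos hv]
    rw [div_mul_cancel₀ _ hv.ne']

lemma norm_myTrunc_sub_le (M : ℝ) (v z : ℂ) (hz : ‖z‖ ≤ M) :
    ‖myTrunc M v - z‖ ≤ ‖v - z‖ := by
  unfold myTrunc; split_ifs with h
  · exact le_refl _
  · push_neg at h
    have hM : 0 ≤ M := (norm_nonneg z).trans hz
    have hv : 0 < ‖v‖ := hM.trans_lt h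
    set c : ℝ := M / ‖v‖ with hc
    have hc0 : 0 ≤ c := div_nonneg hM hv.le
    have hc1 : c ≤ 1 := by rw [hc, div_le_one hv]; exact h.le
    have hcv : c * ‖v‖ = M := div_mul_cancel₀ _ hv.ne'
    have key : ‖(c : ℝ) • v - z‖ ^ 2 ≤ ‖v - z‖ ^ 2 := by
      rw [norm_sub_sq_real, norm_sub_sq_real, real_inner_smul_left, norm_smul,
        Real.norm_of_nonneg hc0]
      have hip := real_inner_le_norm v z
      nlinarith [sq_nonneg (1 - c), norm_nonneg v, norm_nonneg z,
        mul_le_mul_of_nonneg_left hz (norm_nonneg v)]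
    nlinarith [norm_nonneg ((c : ℝ) • v - z), norm_nonneg (v - z)]

lemma exists_P_partition (a b : ℝ) (hab : a < b) (P : Set ℝ)
    (hPdense : Set.Icc a b ⊆ closure P) (δ : ℝ) (hδ : 0 < δ) :
    ∃ (k : ℕ) (t : Fin (k + 1) → ℝ), StrictMono t ∧ t 0 = a ∧ t (Fin.last k) = b ∧
      (∀ i : Fin (k + 1), t i ∈ P ∪ {a, b}) ∧
      ∀ i : Fin k, t i.succ - t i.castSucc < δ := by
  obtain ⟨n, hn⟩ := exists_nat_gt (2 * (b - a) / δ)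
  have hn0 : 0 < (n : ℝ) := lt_of_le_of_lt (div_nonneg (by linarith) hδ.le) hn
  have hnn : 0 < n := by exact_mod_cast hn0
  set s : ℝ := (b - a) / n with hs
  have hs0 : 0 < s := div_pos (by linarith) hn0
  have hsδ : s < δ / 2 := by
    rw [hs, div_lt_iff₀ hn0]
    rw [div_lt_iff₀ hδ] at hn
    nlinarith
  -- choose interior points
  have hchoice : ∀ i : ℕ, ∃ qi : ℝ, 0 < i → i < n → qi ∈ P ∧ |qi - (a + i * s)| < s / 4 := by
    intro i
    by_cases hi : 0 < i ∧ i < n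
    · have hx : a + i * s ∈ Set.Icc a b := by
        constructor
        · nlinarith [hi.1, hs0, (show (1:ℝ) ≤ (i:ℝ) by exact_mod_cast hi.1)]
        · have h1 : (i : ℝ) ≤ n := by exact_mod_cast hi.2.le
          have h2 : (i : ℝ) * s ≤ n * s := by nlinarith
          have hns : (n:ℝ) * s = b - a := by rw [hs]; field_simp
          linarith
      have := hPdense hx
      rw [Metric.mem_closure_iff] at this
      obtain ⟨qi, hqP, hqd⟩ := this (s / 4) (by linarith)
      exact ⟨qi, fun _ _ => ⟨hqP, by rw [abs_sub_comm]; simpa [Real.dist_eq] using hqd⟩⟩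
    · exact ⟨0, fun h1 h2 => absurd ⟨h1, h2⟩ hi⟩
  choose q hq using hchoice
  refine ⟨n, ?_⟩
  set t : Fin (n + 1) → ℝ := fun i =>
    if (i : ℕ) = 0 then a else if (i : ℕ) = n then b else q i with ht
  have hns : (n : ℝ) * s = b - a := by rw [hs]; field_simp
  have key : ∀ i : Fin (n + 1), |t i - (a + i * s)| ≤ s / 4 := by
    intro i
    rcases Nat.eq_zero_or_pos (i : ℕ) with h0 | h0
    · have hti : t i = a := by simp only [ht]; exact if_pos h0
      rw [hti, h0]
      push_cast
      rw [show a - (a + 0 * s) = 0 by ring]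
      simp; positivity
    · by_cases hin : (i : ℕ) = n
      · have hti : t i = b := by
          simp only [ht]; rw [if_neg (by omega), if_pos hin]
        rw [hti, hin, show b - (a + (n:ℝ) * s) = 0 by rw [hns]; ring]
        simp; positivity
      · have hlt : (i : ℕ) < n := by have := i.isLt; omega
        have hti : t i = q i := by
          simp only [ht]; rw [if_neg (by omega), if_neg hin]
        rw [hti]
        exact ((hq i h0 hlt).2).le
  have hmem : ∀ i : Fin (n + 1), t i ∈ P ∪ {a, b} := by
    intro i
    rcases Nat.eq_zero_or_pos (i : ℕ) with h0 | h0
    · right; left; simp only [ht]; rw [if_pos h0]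
    · by_cases hin : (i : ℕ) = n
      · right; right; simp only [ht]; rw [if_neg (by omega), if_pos hin]; rfl
      · have hlt : (i : ℕ) < n := by have := i.isLt; omega
        left
        have hti : t i = q i := by simp only [ht]; rw [if_neg (by omega), if_neg hin]
        rw [hti]; exact (hq i h0 hlt).1
  have hgap : ∀ i : Fin n, s / 2 ≤ t i.succ - t i.castSucc ∧
      t i.succ - t i.castSucc ≤ 3 * s / 2 := by
    intro i
    have k1 := key i.castSucc
    have k2 := key i.succ
    rw [abs_le] at k1 k2
    have e1 : ((i.succ : Fin (n+1)) : ℕ) = (i : ℕ) + 1 := rfl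
    have e2 : ((i.castSucc : Fin (n+1)) : ℕ) = (i : ℕ) := rfl
    rw [e1] at k2; rw [e2] at k1
    push_cast at k1 k2
    constructor <;> nlinarith [k1.1, k1.2, k2.1, k2.2]
  have hmono : StrictMono t := by
    rw [Fin.strictMono_iff_lt_succ]
    intro i
    have := (hgap i).1
    linarith [hs0]
  refine ⟨t, hmono, ?_, ?_, hmem, ?_⟩
  · simp [ht]
  · simp [ht, Fin.val_last, hnn.ne']
  · intro i
    have := (hgap i).2
    linarith [hsδ]

lemma step_builder (a b : ℝ) (hab : a < b) (P : Set ℝ)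
    (hPdense : Set.Icc a b ⊆ closure P) (M : ℝ) (hM : 0 ≤ M) (f : ℝ → ℂ)
    (hfM : ∀ᵐ x ∂(volume.restrict (Set.Icc a b)), ‖f x‖ ≤ M)
    (g : ℝ → ℂ) (hg : Continuous g) (ε : ℝ) (hε : 0 < ε) :
    ∃ F : ℝ → ℂ, IsStepOnWith a b P F ∧ Measurable F ∧ (∀ x, ‖F x‖ ≤ M) ∧
      ∀ᵐ x ∂(volume.restrict (Set.Icc a b)), ‖F x - f x‖ ≤ ε + ‖g x - f x‖ := by
  -- uniform continuity on [a،b]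
  have hu := (isCompact_Icc (a := a) (b := b)).uniformContinuousOn_of_continuous
    hg.continuousOn
  rw [Metric.uniformContinuousOn_iff] at hu
  obtain ⟨δ, hδ0, hδ⟩ := hu ε hε
  obtain ⟨k, t, hmono, ht0, htl, htmem, hmesh⟩ :=
    exists_P_partition a b hab P hPdense δ hδ0
  set F : ℝ → ℂ := fun x => ∑ i : Fin k,
    Set.indicator (Set.Ico (t i.castSucc) (t i.succ)) (fun _ => myTrunc M (g (t i.castSucc))) x
    with hF
  -- at most one interval contains x
  have huniq : ∀ (i j : Fin k) (x : ℝ), x ∈ Set.Ico (t i.castSucc) (t i.succ) →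
      x ∈ Set.Ico (t j.castSucc) (t j.succ) → i = j := by
    intro i j x hi hj
    by_contra hne
    rcases lt_or_gt_of_ne hne with hlt | hlt
    · have : (i.succ : Fin (k+1)) ≤ j.castSucc := by
        rw [Fin.le_def]
        simp only [Fin.val_succ, Fin.coe_castSucc]
        exact Fin.lt_def.mp hlt
      have := hmono.monotone this
      exact absurd (hi.2.trans_le (this.trans hj.1)) (lt_irrefl x)
    · have : (j.succ : Fin (k+1)) ≤ i.castSucc := by
        rw [Fin.le_def]
        simp only [Fin.val_succ, Fin.coe_castSucc]
        exact Fin.lt_def.mp hlt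
      have := hmono.monotone this
      exact absurd (hj.2.trans_le (this.trans hi.1)) (lt_irrefl x)
  have heval : ∀ (i : Fin k) (x : ℝ), x ∈ Set.Ico (t i.castSucc) (t i.succ) →
      F x = myTrunc M (g (t i.castSucc)) := by
    intro i x hx
    simp only [hF]
    rw [Finset.sum_eq_single i]
    · exact Set.indicator_of_mem hx _
    · intro j _ hji
      apply Set.indicator_of_notMem
      intro hxj
      exact hji (huniq j i x hxj hx)
    · intro hi; exact absurd (Finset.mem_univ i) hi
  -- covering
  have hcover : ∀ x ∈ Set.Ico a b, ∃ i : Fin k, x ∈ Set.Ico (t i.castSucc) (t i.succ) := by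
    intro x hx
    have h0S : t 0 ≤ x := by rw [ht0]; exact hx.1
    classical
    set S : Finset (Fin (k+1)) := Finset.univ.filter (fun j => t j ≤ x) with hS
    have hSne : S.Nonempty := ⟨0, by simp [hS, h0S]⟩
    set m := S.max' hSne with hm
    have hmS : m ∈ S := S.max'_mem hSne
    have hmx : t m ≤ x := by
      simp only [hS, Finset.mem_filter] at hmS; exact hmS.2
    have hmlast : (m : ℕ) < k := by
      by_contra hc
      have : m = Fin.last k := by
        apply Fin.ext; simp only [Fin.val_last]; omega
      rw [this, htl] at hmx
      exact absurd hmx (not_le.mpr hx.2)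
    refine ⟨⟨(m : ℕ), hmlast⟩, ?_, ?_⟩
    · have : (⟨(m : ℕ), hmlast⟩ : Fin k).castSucc = m := by
        apply Fin.ext; rfl
      rw [this]; exact hmx
    · by_contra hc
      push_neg at hc
      have hsuccS : (⟨(m : ℕ), hmlast⟩ : Fin k).succ ∈ S := by
        simp only [hS, Finset.mem_filter]
        exact ⟨Finset.mem_univ _, hc⟩
      have := S.le_max' _ hsuccS
      rw [← hm] at this
      rw [Fin.le_def] at this
      simp only [Fin.val_succ] at this
      omega
  -- t values lie in Icc a b
  have htIcc : ∀ i : Fin (k+1), t i ∈ Set.Icc a b := by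
    intro i
    constructor
    · rw [← ht0]; exact hmono.monotone (Fin.zero_le i)
    · rw [← htl]; exact hmono.monotone (Fin.le_last i)
  refine ⟨F, ⟨k, t, hmono, ht0, htl, htmem, ?_⟩, ?_, ?_, ?_⟩
  · -- step on open intervals
    intro i
    refine ⟨myTrunc M (g (t i.castSucc)), fun x hx => ?_⟩
    exact heval i x ⟨hx.1.le, hx.2⟩
  · -- measurable
    apply Finset.measurable_sum
    intro i _
    exact Measurable.indicator measurable_const measurableSet_Ico
  · -- bounded
    intro x
    by_cases hx : ∃ i : Fin k, x ∈ Set.Ico (t i.castSucc) (t i.succ)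
    · obtain ⟨i, hi⟩ := hx
      rw [heval i x hi]
      exact norm_myTrunc_le M hM _
    · push_neg at hx
      have : F x = 0 := by
        rw [hF]
        exact Finset.sum_eq_zero fun i _ => Set.indicator_of_notMem (hx i) _
      rw [this]; simpa using hM
  · -- ae estimate
    have hb : ∀ᵐ x ∂(volume.restrict (Set.Icc a b)), x ≠ b := by
      rw [ae_iff]
      have hsub : {x : ℝ | ¬ x ≠ b} ⊆ {b} := by
        intro x hx
        simp only [Set.mem_setOf_eq, not_not] at hx
        simp [hx]
      apply measure_mono_null hsub
      exact le_antisymm ((Measure.restrict_apply_le _ _).trans (by simp)) zero_le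
    filter_upwards [hfM, ae_restrict_mem measurableSet_Icc, hb] with x hfx hxIcc hxb
    have hxIco : x ∈ Set.Ico a b := ⟨hxIcc.1, lt_of_le_of_ne hxIcc.2 hxb⟩
    obtain ⟨i, hi⟩ := hcover x hxIco
    rw [heval i x hi]
    have h1 : ‖myTrunc M (g (t i.castSucc)) - f x‖ ≤ ‖g (t i.castSucc) - f x‖ :=
      norm_myTrunc_sub_le M _ _ hfx
    have h2 : ‖g (t i.castSucc) - f x‖ ≤ ‖g (t i.castSucc) - g x‖ + ‖g x - f x‖ := by
      have := norm_sub_le_norm_sub_add_norm_sub (g (t i.castSucc)) (g x) (f x)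
      linarith
    have h3 : ‖g (t i.castSucc) - g x‖ < ε := by
      have hd : dist (t i.castSucc) x < δ := by
        rw [Real.dist_eq, abs_sub_comm, abs_of_nonneg (by linarith [hi.1])]
        have := hmesh i
        linarith [hi.1, hi.2]
      have := hδ (t i.castSucc) (htIcc i.castSucc) x hxIcc hd
      rwa [dist_eq_norm] at this
    linarith

/-- Weak* approximation in `L_∞(a,b)` by step functions whose partition points
lie in a given dense subset `P` of `[a,b]`: for every `f ∈ L_∞(a,b)` there is a
sequence of such step functions with `∫ fₖ h → ∫ f h` for all `h ∈ L₁(a,b)`. -/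
theorem stmt_9 (a b : ℝ) (hab : a < b) (P : Set ℝ)
    (hPsub : P ⊆ Set.Icc a b) (hPdense : Set.Icc a b ⊆ closure P)
    (f : ℝ → ℂ) (hf : MemLp f ⊤ (volume.restrict (Set.Icc a b))) :
    ∃ F : ℕ → ℝ → ℂ,
      (∀ k : ℕ, IsStepOnWith a b P (F k)) ∧
      ∀ h : ℝ → ℂ, Integrable h (volume.restrict (Set.Icc a b)) →
        Tendsto (fun k => ∫ t in Set.Icc a b, F k t * h t) atTop
          (nhds (∫ t in Set.Icc a b, f t * h t)) := by
  set μ := volume.restrict (Set.Icc a b) with hμ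
  -- essential bound
  set M : ℝ := (eLpNormEssSup f μ).toReal with hMdef
  have hM : 0 ≤ M := ENNReal.toReal_nonneg
  have hess : eLpNormEssSup f μ ≠ ∞ := by
    have h2 := hf.2
    rw [eLpNorm_exponent_top] at h2
    exact h2.ne
  have hfM : ∀ᵐ x ∂μ, ‖f x‖ ≤ M := by
    filter_upwards [ae_le_eLpNormEssSup (f := f) (μ := μ)] with x hx
    have : (‖f x‖₊ : ℝ≥0∞) ≤ eLpNormEssSup f μ := hx
    have h2 := ENNReal.toReal_mono hess this
    simpa using h2
  -- integrability of f
  have hInt : Integrable f μ := hf.integrable le_top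
  have hμuniv : μ Set.univ = ENNReal.ofReal (b - a) := by
    rw [hμ, Measure.restrict_apply_univ, Real.volume_Icc]
  -- the approximating sequence
  have hGex : ∀ k : ℕ, ∃ G : ℝ → ℂ, IsStepOnWith a b P G ∧ Measurable G ∧
      (∀ x, ‖G x‖ ≤ M) ∧ eLpNorm (G - f) 1 μ ≤ ENNReal.ofReal (1 / (k + 1)) := by
    intro k
    set ε : ℝ := 1 / (k + 1) with hεdef
    have hε : 0 < ε := by positivity
    -- continuous approximation
    have hf' : MemLp ((Set.Icc a b).indicator f) 1 (volume : Measure ℝ) := by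
      rw [memLp_one_iff_integrable]
      exact (integrable_indicator_iff measurableSet_Icc).2 hInt
    obtain ⟨g, hgsupp, hgapp, hgcont, hgmem⟩ :=
      hf'.exists_hasCompactSupport_eLpNorm_sub_le (p := 1) ENNReal.one_ne_top
        (ε := ENNReal.ofReal (ε / 2))
        (by rw [ne_eq, ENNReal.ofReal_eq_zero]; push_neg; positivity)
    have hgf : eLpNorm (fun x => g x - f x) 1 μ ≤ ENNReal.ofReal (ε / 2) := by
      have h1 : ((Set.Icc a b).indicator f - g) =ᵐ[μ] (fun x => f x - g x) := by
        filter_upwards [indicator_ae_eq_restrict (f := f)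
          (measurableSet_Icc (a := a) (b := b))] with x hx
        simp [hx]
      calc eLpNorm (fun x => g x - f x) 1 μ
          = eLpNorm (fun x => f x - g x) 1 μ := eLpNorm_sub_comm g f 1 μ
        _ = eLpNorm ((Set.Icc a b).indicator f - g) 1 μ := (eLpNorm_congr_ae h1).symm
        _ ≤ eLpNorm ((Set.Icc a b).indicator f - g) 1 volume :=
            eLpNorm_mono_measure _ Measure.restrict_le_self
        _ ≤ ENNReal.ofReal (ε / 2) := hgapp
    obtain ⟨G, hGstep, hGmeas, hGbd, hGae⟩ := step_builder a b hab P hPdense M hM f hfM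
      g hgcont (ε / (2 * (b - a))) (div_pos hε (by linarith))
    refine ⟨G, hGstep, hGmeas, hGbd, ?_⟩
    have hle : eLpNorm (G - f) 1 μ ≤
        eLpNorm (fun x => ε / (2 * (b - a)) + ‖g x - f x‖) 1 μ := by
      apply eLpNorm_mono_ae
      filter_upwards [hGae] with x hx
      rw [Real.norm_of_nonneg (add_nonneg (div_pos hε (by linarith)).le (norm_nonneg _))]
      exact hx
    have hsplit : eLpNorm (fun x => ε / (2 * (b - a)) + ‖g x - f x‖) 1 μ ≤
        eLpNorm (fun _ : ℝ => ε / (2 * (b - a))) 1 μ +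
        eLpNorm (fun x => ‖g x - f x‖) 1 μ := by
      exact eLpNorm_add_le aestronglyMeasurable_const
        ((hgcont.aestronglyMeasurable.sub hf.1).norm) le_rfl
    have hconst : eLpNorm (fun _ : ℝ => ε / (2 * (b - a))) 1 μ ≤ ENNReal.ofReal (ε / 2) := by
      have := eLpNorm_le_of_ae_bound (μ := μ) (p := 1)
        (f := fun _ : ℝ => ε / (2 * (b - a))) (C := ε / (2 * (b - a)))
        (Filter.Eventually.of_forall fun x =>
          le_of_eq (Real.norm_of_nonneg (div_pos hε (by linarith)).le))
      refine this.trans ?_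
      rw [hμuniv]
      rw [show ((1 : ℝ≥0∞).toReal)⁻¹ = 1 by simp, ENNReal.rpow_one]
      rw [← ENNReal.ofReal_mul (by linarith)]
      apply ENNReal.ofReal_le_ofReal
      rw [show (b - a) * (ε / (2 * (b - a))) = ε / 2 by
        rw [← div_div, mul_comm, div_mul_cancel₀ _ (sub_ne_zero.mpr hab.ne')]]
    have hnorm : eLpNorm (fun x => ‖g x - f x‖) 1 μ = eLpNorm (fun x => g x - f x) 1 μ :=
      eLpNorm_norm _
    calc eLpNorm (G - f) 1 μ ≤ _ := hle
      _ ≤ _ := hsplit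
      _ ≤ ENNReal.ofReal (ε / 2) + ENNReal.ofReal (ε / 2) := by
          rw [hnorm]; exact add_le_add hconst hgf
      _ = ENNReal.ofReal ε := by
          rw [← ENNReal.ofReal_add (by positivity) (by positivity)]; ring_nf
  choose G hGstep hGmeas hGbd hGsn using hGex
  -- convergence in measure and a.e. subsequence
  have htend : Tendsto (fun k => eLpNorm (G k - f) 1 μ) atTop (nhds 0) := by
    have hup : Tendsto (fun k : ℕ => ENNReal.ofReal (1 / (k + 1))) atTop (nhds 0) := by
      have : Tendsto (fun k : ℕ => 1 / ((k : ℝ) + 1)) atTop (nhds 0) :=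
        tendsto_one_div_add_atTop_nhds_zero_nat
      have := ENNReal.tendsto_ofReal this
      simpa using this
    exact tendsto_of_tendsto_of_tendsto_of_le_of_le tendsto_const_nhds hup
      (fun k => zero_le) hGsn
  have hinmeas : TendstoInMeasure μ G atTop f :=
    tendstoInMeasure_of_tendsto_eLpNorm one_ne_zero
      (fun n => (hGmeas n).aestronglyMeasurable) hf.1 htend
  obtain ⟨ns, hns, hae⟩ := hinmeas.exists_seq_tendsto_ae
  refine ⟨fun k => G (ns k), fun k => hGstep (ns k), ?_⟩
  intro h hh
  apply tendsto_integral_of_dominated_convergence (fun t => M * ‖h t‖)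
  · exact fun n => ((hGmeas (ns n)).aestronglyMeasurable.mul hh.1)
  · exact hh.norm.const_mul M
  · intro n
    apply Filter.Eventually.of_forall
    intro t
    rw [norm_mul]
    exact mul_le_mul_of_nonneg_right (hGbd (ns n) t) (norm_nonneg _)
  · filter_upwards [hae] with t ht
    exact ht.mul tendsto_const_nhds
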